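/- In the reduction program P(A), after executing k loop iterations choosing letters a_1,...,a_k (starting from a store where all variables are positive except X_{q_0} = 0), the variable X_q holds 0 if and only if state q is reachable in A from q_0 on the word a_1...a_k; consequently after Fin, Z = 0 if and only if A accepts a_1...a_k. -/

import Mathlib

open Finset

variable {n : ℕ}

/-- One subset-construction step of the NFA with transition relation `δ`. -/
def setStep (δ : Fin n → Fin 2 → Fin n → Bool) (S : Finset (Fin n))
    (a : Fin 2) : Finset (Fin n) :=
  Finset.univ.filter fun q => ∃ i ∈ S, δ i a q

/-- The set of states of the NFA reachable from `q₀` on the word `w`. -/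
def reachSet (δ : Fin n → Fin 2 → Fin n → Bool) (q₀ : Fin n)
    (w : List (Fin 2)) : Finset (Fin n) :=
  w.foldl (setStep δ) {q₀}

/-- The NFA `(Fin n, {0,1}, δ, q₀, F)` accepts the word `w`. -/
def Accepts (δ : Fin n → Fin 2 → Fin n → Bool) (q₀ : Fin n)
    (F : Finset (Fin n)) (w : List (Fin 2)) : Prop :=
  ∃ f ∈ F, f ∈ reachSet δ q₀ w

/-- One iteration of the loop of the reduction program, choosing letter `a`:
for each state `q`, `X'_q := Z · ∏ (X_i over a-predecessors i of q)`, then the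
`X'_q` are copied into the `X_q`; `Z` is unchanged.  The store is the pair of
the state variables `X` and the variable `Z`. -/
def progStep (δ : Fin n → Fin 2 → Fin n → Bool) (a : Fin 2)
    (s : (Fin n → ℕ) × ℕ) : (Fin n → ℕ) × ℕ :=
  (fun q => s.2 * ∏ i ∈ Finset.univ.filter (fun i => δ i a q), s.1 i, s.2)

/-- Executing the loop body once per letter of `w`, starting from the store
obtained from the input `x` by the initial reset `X_{q₀} := 0` (and `Z = z`). -/
def runLoop (δ : Fin n → Fin 2 → Fin n → Bool) (q₀ : Fin n)
    (x : Fin n → ℕ) (z : ℕ) (w : List (Fin 2)) : (Fin n → ℕ) × ℕ :=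
  w.foldl (fun s a => progStep δ a s) (Function.update x q₀ 0, z)

/-- The final value of `Z` after the command `Fin`, which sets
`Z := Z · ∏_{f ∈ F} X_f`. -/
def finOut (δ : Fin n → Fin 2 → Fin n → Bool) (q₀ : Fin n)
    (F : Finset (Fin n)) (x : Fin n → ℕ) (z : ℕ) (w : List (Fin 2)) : ℕ :=
  (runLoop δ q₀ x z w).2 * ∏ f ∈ F, (runLoop δ q₀ x z w).1 f

variable {δ : Fin n → Fin 2 → Fin n → Bool}

lemma foldl_progStep_snd (w : List (Fin 2)) (s : (Fin n → ℕ) × ℕ) :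
    (w.foldl (fun s a => progStep δ a s) s).2 = s.2 := by
  induction w generalizing s with
  | nil => rfl
  | cons a w ih => exact ih (progStep δ a s)

/-- As `ℕ` has no zero divisors and `Z ≠ 0`, the zero set of `X` evolves by the subset
construction. -/
lemma progStep_fst_eq_zero_iff {a : Fin 2} {s : (Fin n → ℕ) × ℕ} {S : Finset (Fin n)}
    (hz : 0 < s.2) (hS : ∀ q, s.1 q = 0 ↔ q ∈ S) (q : Fin n) :
    (progStep δ a s).1 q = 0 ↔ q ∈ setStep δ S a := by
  simp only [progStep, setStep, mul_eq_zero, hz.ne', false_or, prod_eq_zero_iff, mem_filter,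
    mem_univ, true_and, hS]
  exact exists_congr fun i => and_comm

lemma foldl_progStep_fst_eq_zero_iff (w : List (Fin 2)) {s : (Fin n → ℕ) × ℕ}
    {S : Finset (Fin n)} (hz : 0 < s.2) (hS : ∀ q, s.1 q = 0 ↔ q ∈ S) (q : Fin n) :
    (w.foldl (fun s a => progStep δ a s) s).1 q = 0 ↔ q ∈ w.foldl (setStep δ) S := by
  induction w generalizing s S with
  | nil => exact hS q
  | cons a w ih => exact ih hz (progStep_fst_eq_zero_iff hz hS)

lemma runLoop_snd (q₀ : Fin n) (x : Fin n → ℕ) (z : ℕ) (w : List (Fin 2)) :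
    (runLoop δ q₀ x z w).2 = z :=
  foldl_progStep_snd w _

/-- starting from a store positive everywhere except
`X_{q₀} = 0`, after the loop iterations for the letters of `w` the variable
`X_q` is zero iff `q` is reachable on `w`; consequently after `Fin`,
`Z = 0` iff the NFA accepts `w`. -/
theorem zero_iff_reachable
    (δ : Fin n → Fin 2 → Fin n → Bool) (q₀ : Fin n) (F : Finset (Fin n))
    (x : Fin n → ℕ) (z : ℕ) (w : List (Fin 2))
    (hx : ∀ q : Fin n, q ≠ q₀ → 0 < x q) (hz : 0 < z) :
    (∀ q : Fin n, (runLoop δ q₀ x z w).1 q = 0 ↔ q ∈ reachSet δ q₀ w) ∧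
    (finOut δ q₀ F x z w = 0 ↔ Accepts δ q₀ F w) := by
  have hinit : ∀ q, Function.update x q₀ 0 q = 0 ↔ q ∈ ({q₀} : Finset (Fin n)) := by
    intro q
    rcases eq_or_ne q q₀ with rfl | hq
    · simp
    · simp [hq, (hx q hq).ne']
  have hX : ∀ q, (runLoop δ q₀ x z w).1 q = 0 ↔ q ∈ reachSet δ q₀ w :=
    foldl_progStep_fst_eq_zero_iff w (S := {q₀}) hz hinit
  refine ⟨hX, ?_⟩
  rw [finOut, runLoop_snd, mul_eq_zero, prod_eq_zero_iff]
  simp only [hz.ne', false_or, hX, Accepts]
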